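/- arXiv:2307.16153 — 2 statements merged into one kernel-verified Lean document; each statement's English description precedes it below -/
import Mathlib

section
/- In the mass-critical case α = 4/d, for any ω > 0, any t > 0 and any minimizer u_ω of γ_ω, the rescaled function v^t(x,y) := t^{d/2} u_ω(tx, y) is also a minimizer of γ_ω. -/
open MeasureTheory Real Filter Topology

noncomputable section

namespace NLS

/-- Points of `ℝ^d × ℝ^m`; functions that are `2π`-periodic in the second
variable model functions on the waveguide `ℝ^d × 𝕋^m`, `𝕋 = ℝ/2πℤ`. -/
abbrev Pt (d m : ℕ) := (Fin d → ℝ) × (Fin m → ℝ)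

/-- Fundamental domain `ℝ^d × [0,2π)^m`. -/
def fundDom (d m : ℕ) : Set (Pt d m) :=
  Set.univ ×ˢ Set.pi Set.univ fun _ => Set.Ico (0 : ℝ) (2 * π)

/-- The measure on the waveguide: Lebesgue measure restricted to a fundamental domain. -/
def μw (d m : ℕ) : Measure (Pt d m) := volume.restrict (fundDom d m)

/-- `2π`-periodicity in the torus variables. -/
def IsPeriodic {d m : ℕ} (u : Pt d m → ℂ) : Prop :=
  ∀ (p : Pt d m) (k : Fin m → ℤ), u (p.1, p.2 + fun i => 2 * π * (k i : ℝ)) = u p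

/-- The `i`-th partial derivative in the `x` variables. -/
def dX {d m : ℕ} (u : Pt d m → ℂ) (p : Pt d m) (i : Fin d) : ℂ :=
  fderiv ℝ u p (Pi.single i 1, 0)

/-- The `j`-th partial derivative in the `y` variables. -/
def dY {d m : ℕ} (u : Pt d m → ℂ) (p : Pt d m) (j : Fin m) : ℂ :=
  fderiv ℝ u p (0, Pi.single j 1)

/-- `‖∇ₓ u‖_{L²}²`. -/
def gradXsq (d m : ℕ) (u : Pt d m → ℂ) : ℝ :=
  ∫ p, (∑ i, ‖dX u p i‖ ^ 2) ∂(μw d m)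

/-- `‖∇_y u‖_{L²}²`. -/
def gradYsq (d m : ℕ) (u : Pt d m → ℂ) : ℝ :=
  ∫ p, (∑ j, ‖dY u p j‖ ^ 2) ∂(μw d m)

/-- The mass `M(u) = ‖u‖_{L²}²`. -/
def Mass (d m : ℕ) (u : Pt d m → ℂ) : ℝ :=
  ∫ p, ‖u p‖ ^ 2 ∂(μw d m)

/-- `‖u‖_{L^{α+2}}^{α+2}`. -/
def Pot (d m : ℕ) (α : ℝ) (u : Pt d m → ℂ) : ℝ :=
  ∫ p, ‖u p‖ ^ (α + 2) ∂(μw d m)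

/-- Membership in `H^1(ℝ^d×𝕋^m) ∩ L^{α+2}` (with a differentiable representative). -/
structure InH1 (d m : ℕ) (α : ℝ) (u : Pt d m → ℂ) : Prop where
  diff : Differentiable ℝ u
  periodic : IsPeriodic u
  memL2 : Integrable (fun p => ‖u p‖ ^ 2) (μw d m)
  memGradL2 : Integrable (fun p => ‖fderiv ℝ u p‖ ^ 2) (μw d m)
  memLp : Integrable (fun p => ‖u p‖ ^ (α + 2)) (μw d m)

/-- The energy `E(u)`. -/
def En (d m : ℕ) (α : ℝ) (u : Pt d m → ℂ) : ℝ :=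
  (gradXsq d m u + gradYsq d m u) / 2 - Pot d m α u / (α + 2)

/-- The action `S_ω(u) = E(u) + (ω/2) M(u)`. -/
def Sw (d m : ℕ) (α ω : ℝ) (u : Pt d m → ℂ) : ℝ :=
  En d m α u + ω / 2 * Mass d m u

/-- The virial functional `K(u)`. -/
def Kw (d m : ℕ) (α : ℝ) (u : Pt d m → ℂ) : ℝ :=
  gradXsq d m u - α * d / (2 * (α + 2)) * Pot d m α u

/-- The Nehari functional `N_ω(u)`. -/
def Nw (d m : ℕ) (α ω : ℝ) (u : Pt d m → ℂ) : ℝ :=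
  ω * Mass d m u + gradXsq d m u + gradYsq d m u - Pot d m α u

/-- Values of the action on the virial-vanishing constraint set. -/
def gammaSet (d m : ℕ) (α ω : ℝ) : Set ℝ :=
  Sw d m α ω '' {u | InH1 d m α u ∧ u ≠ 0 ∧ Kw d m α u = 0}

/-- `γ_ω = inf {S_ω(u) : u ∈ H¹∖{0}, K(u) = 0}`. -/
def gamma (d m : ℕ) (α ω : ℝ) : ℝ := sInf (gammaSet d m α ω)

/-- Values of the action on the Nehari constraint set. -/
def betaSet (d m : ℕ) (α ω : ℝ) : Set ℝ :=
  Sw d m α ω '' {u | InH1 d m α u ∧ u ≠ 0 ∧ Nw d m α ω u = 0}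

/-- `β_ω = inf {S_ω(u) : u ∈ H¹∖{0}, N_ω(u) = 0}`. -/
def beta (d m : ℕ) (α ω : ℝ) : ℝ := sInf (betaSet d m α ω)

/-- `m_c = inf {E(u) : u ∈ H¹, M(u) = c, K(u) = 0}`. -/
def mc (d m : ℕ) (α c : ℝ) : ℝ :=
  sInf (En d m α '' {u | InH1 d m α u ∧ Mass d m u = c ∧ Kw d m α u = 0})

/-- `u` is a minimizer for the problem `γ_ω`. -/
def IsGammaMin (d m : ℕ) (α ω : ℝ) (u : Pt d m → ℂ) : Prop :=
  InH1 d m α u ∧ u ≠ 0 ∧ Kw d m α u = 0 ∧ Sw d m α ω u = gamma d m α ω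

/-- `u` is a minimizer for the problem `β_ω`. -/
def IsBetaMin (d m : ℕ) (α ω : ℝ) (u : Pt d m → ℂ) : Prop :=
  InH1 d m α u ∧ u ≠ 0 ∧ Nw d m α ω u = 0 ∧ Sw d m α ω u = beta d m α ω

/-- `u` is a minimizer for the problem `m_c`. -/
def IsMcMin (d m : ℕ) (α c : ℝ) (u : Pt d m → ℂ) : Prop :=
  InH1 d m α u ∧ Mass d m u = c ∧ Kw d m α u = 0 ∧ En d m α u = mc d m α c

/-- Iterated directional derivative. -/
def d2 {d m : ℕ} (u : Pt d m → ℂ) (p v : Pt d m) : ℂ :=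
  fderiv ℝ (fun q => fderiv ℝ u q v) p v

/-- The Laplacian in the `x` variables. -/
def lapX {d m : ℕ} (u : Pt d m → ℂ) (p : Pt d m) : ℂ :=
  ∑ i, d2 u p (Pi.single i 1, 0)

/-- The Laplacian in the `y` variables. -/
def lapY {d m : ℕ} (u : Pt d m → ℂ) (p : Pt d m) : ℂ :=
  ∑ j, d2 u p (0, Pi.single j 1)

/-- The full Laplacian `Δ_{x,y}`. -/
def lap {d m : ℕ} (u : Pt d m → ℂ) (p : Pt d m) : ℂ := lapX u p + lapY u p

/-- `u` solves the stationary equation `-Δ_{x,y} u + ω u = |u|^α u`. -/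
def SolvesStat (d m : ℕ) (α ω : ℝ) (u : Pt d m → ℂ) : Prop :=
  ∀ p, -lap u p + (ω : ℂ) * u p = (↑(‖u p‖ ^ α) : ℂ) * u p

/-- `u` is (real-valued and) pointwise positive. -/
def IsPositive {d m : ℕ} (u : Pt d m → ℂ) : Prop :=
  ∀ p, 0 < (u p).re ∧ (u p).im = 0

/-- The mass-preserving scaling `v^t(x,y) = t^{d/2} u(tx, y)`. -/
def scaleX (d m : ℕ) (t : ℝ) (u : Pt d m → ℂ) : Pt d m → ℂ :=
  fun p => (↑(t ^ ((d : ℝ) / 2)) : ℂ) * u (t • p.1, p.2)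

/-- `Q` is the (radial, positive) ground state of `-Δ Q + Q = Q^{1+4/d}` on `ℝ^d`. -/
def IsGroundStateQ (d : ℕ) (Q : Pt d 0 → ℂ) : Prop :=
  InH1 d 0 (4 / (d : ℝ)) Q ∧ IsPositive Q ∧
  (∀ p q : Pt d 0, ∑ i, (p.1 i) ^ 2 = ∑ i, (q.1 i) ^ 2 → Q p = Q q) ∧
  SolvesStat d 0 (4 / (d : ℝ)) 1 Q

/-- The squared `H¹` norm. -/
def H1normSq (d m : ℕ) (u : Pt d m → ℂ) : ℝ :=
  Mass d m u + gradXsq d m u + gradYsq d m u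

/-- `u : ℝ → H¹` solves the focusing NLS `i∂_t u + Δ_{x,y} u = -|u|^α u` on
the time interval `I`. -/
def IsNLSSolutionOn (d m : ℕ) (α : ℝ) (I : Set ℝ) (u : ℝ → Pt d m → ℂ) : Prop :=
  (∀ t ∈ I, InH1 d m α (u t)) ∧
  ∀ t ∈ I, ∀ p, Complex.I * deriv (fun s => u s p) t + lap (u t) p
      = -((↑(‖u t p‖ ^ α) : ℂ) * u t p)

/-- `u` is a solution of the focusing NLS on the maximal (open, connected)
time interval `I ∋ 0`. -/
def IsMaximalNLSSolution (d m : ℕ) (α : ℝ) (I : Set ℝ) (u : ℝ → Pt d m → ℂ) : Prop :=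
  IsOpen I ∧ (0 : ℝ) ∈ I ∧ IsPreconnected I ∧ IsNLSSolutionOn d m α I u ∧
  ∀ (J : Set ℝ) (v : ℝ → Pt d m → ℂ), IsOpen J → IsPreconnected J → I ⊆ J →
    IsNLSSolutionOn d m α J v → (∀ t ∈ I, v t = u t) → J = I

/-- `v` is a global solution of the linear Schrödinger equation
`i∂_t v + Δ_{x,y} v = 0` (so that `v t = e^{itΔ} (v 0)`). -/
def IsLinearSolution (d m : ℕ) (v : ℝ → Pt d m → ℂ) : Prop :=
  ∀ t p, Complex.I * deriv (fun s => v s p) t + lap (v t) p = 0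

end NLS

namespace NLS


section ScaleAux

variable {d m : ℕ}

/-- The scaling map as a continuous linear map. -/
def sMap (d m : ℕ) (t : ℝ) : Pt d m →L[ℝ] Pt d m :=
  (t • ContinuousLinearMap.id ℝ (Fin d → ℝ)).prodMap (ContinuousLinearMap.id ℝ (Fin m → ℝ))

lemma sMap_apply (t : ℝ) (p : Pt d m) : sMap d m t p = (t • p.1, p.2) := rfl

lemma measurable_scale (t : ℝ) :
    Measurable (fun p : Pt d m => ((t • p.1, p.2) : Pt d m)) :=
  (measurable_fst.const_smul t).prodMk measurable_snd

lemma fundDom_measurableSet : MeasurableSet (fundDom d m) :=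
  MeasurableSet.univ.prod (MeasurableSet.univ_pi fun _ => measurableSet_Ico)

lemma preimage_fundDom (t : ℝ) :
    (fun p : Pt d m => ((t • p.1, p.2) : Pt d m)) ⁻¹' fundDom d m = fundDom d m := by
  ext p
  simp [fundDom]

lemma smul_measure_prod {α β : Type*} [MeasurableSpace α] [MeasurableSpace β]
    (c : ENNReal) (μ : Measure α) [SFinite μ] (ν : Measure β) [SFinite ν] :
    (c • μ).prod ν = c • (μ.prod ν) := by
  ext s hs
  rw [Measure.prod_apply hs, Measure.smul_apply, Measure.prod_apply hs,
    lintegral_smul_measure, smul_eq_mul]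

lemma map_scale_volume (t : ℝ) (ht : 0 < t) :
    Measure.map (fun p : Pt d m => ((t • p.1, p.2) : Pt d m)) volume
      = ENNReal.ofReal ((t ^ d)⁻¹) • volume := by
  have htd : (t : ℝ) ^ d ≠ 0 := pow_ne_zero _ ht.ne'
  have hdet : LinearMap.det ((t • LinearMap.id : (Fin d → ℝ) →ₗ[ℝ] (Fin d → ℝ))) = t ^ d := by
    rw [LinearMap.det_smul, LinearMap.det_id, Module.finrank_fin_fun, mul_one]
  have h1 : Measure.map (fun x : Fin d → ℝ => t • x) volume
      = ENNReal.ofReal ((t ^ d)⁻¹) • volume := by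
    have hco : (fun x : Fin d → ℝ => t • x)
        = ⇑(t • LinearMap.id : (Fin d → ℝ) →ₗ[ℝ] (Fin d → ℝ)) := by
      ext x i; simp
    have h := Measure.map_linearMap_addHaar_eq_smul_addHaar (volume : Measure (Fin d → ℝ))
      (f := (t • LinearMap.id : (Fin d → ℝ) →ₗ[ℝ] (Fin d → ℝ))) (by rw [hdet]; exact htd)
    rw [hdet] at h
    rw [hco, h, abs_of_pos (by positivity)]
  have h2 : (fun p : Pt d m => ((t • p.1, p.2) : Pt d m))
      = Prod.map (fun x : Fin d → ℝ => t • x) (id : (Fin m → ℝ) → (Fin m → ℝ)) := rfl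
  have hmeas : Measurable (fun x : Fin d → ℝ => t • x) := measurable_const_smul t
  rw [h2, Measure.volume_eq_prod,
    ← Measure.map_prod_map _ _ hmeas measurable_id,
    Measure.map_id, h1, smul_measure_prod]

lemma map_scale_μw (t : ℝ) (ht : 0 < t) :
    Measure.map (fun p : Pt d m => ((t • p.1, p.2) : Pt d m)) (μw d m)
      = ENNReal.ofReal ((t ^ d)⁻¹) • μw d m := by
  rw [μw]
  conv_lhs => rw [← preimage_fundDom (d := d) (m := m) t]
  rw [← Measure.restrict_map (measurable_scale t) fundDom_measurableSet,
    map_scale_volume t ht, Measure.restrict_smul]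

/-- The scaling map as a measurable equivalence. -/
def sEquiv (d m : ℕ) (t : ℝ) (ht : t ≠ 0) : Pt d m ≃ᵐ Pt d m :=
  ((Homeomorph.smulOfNeZero t ht).prodCongr (Homeomorph.refl (Fin m → ℝ))).toMeasurableEquiv

lemma sEquiv_coe (t : ℝ) (ht : t ≠ 0) :
    ⇑(sEquiv d m t ht) = fun p : Pt d m => ((t • p.1, p.2) : Pt d m) := rfl

lemma integral_comp_scale (t : ℝ) (ht : 0 < t) (g : Pt d m → ℝ) :
    ∫ p, g (t • p.1, p.2) ∂(μw d m) = (t ^ d)⁻¹ * ∫ p, g p ∂(μw d m) := by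
  have h := MeasureTheory.integral_map_equiv (μ := μw d m) (sEquiv d m t ht.ne') g
  rw [sEquiv_coe] at h
  rw [show (fun p : Pt d m => g (t • p.1, p.2))
      = fun p : Pt d m => g ((fun q : Pt d m => ((t • q.1, q.2) : Pt d m)) p) from rfl]
  rw [← h, map_scale_μw t ht, integral_smul_measure,
    ENNReal.toReal_ofReal (by positivity), smul_eq_mul]

lemma integrable_comp_scale (t : ℝ) (ht : 0 < t) {g : Pt d m → ℝ}
    (hg : Integrable g (μw d m)) :
    Integrable (fun p : Pt d m => g (t • p.1, p.2)) (μw d m) := by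
  have h : Integrable g
      (Measure.map (fun p : Pt d m => ((t • p.1, p.2) : Pt d m)) (μw d m)) := by
    rw [map_scale_μw t ht]
    exact hg.smul_measure ENNReal.ofReal_ne_top
  rw [← sEquiv_coe t ht.ne'] at h
  exact (MeasureTheory.integrable_map_equiv (sEquiv d m t ht.ne') g).mp h

variable {u : Pt d m → ℂ}

lemma fderiv_scaleX (hu : Differentiable ℝ u) (t : ℝ) (p : Pt d m) :
    fderiv ℝ (scaleX d m t u) p
      = (↑(t ^ ((d : ℝ) / 2)) : ℂ) • ((fderiv ℝ u (t • p.1, p.2)).comp (sMap d m t)) := by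
  have h1 : HasFDerivAt (fun q : Pt d m => u (sMap d m t q))
      ((fderiv ℝ u (sMap d m t p)).comp (sMap d m t)) p :=
    ((hu (sMap d m t p)).hasFDerivAt).comp p ((sMap d m t).hasFDerivAt)
  have h2 : HasFDerivAt (scaleX d m t u)
      ((↑(t ^ ((d : ℝ) / 2)) : ℂ) • ((fderiv ℝ u (sMap d m t p)).comp (sMap d m t))) p :=
    h1.const_mul _
  exact h2.fderiv

lemma diff_scaleX (hu : Differentiable ℝ u) (t : ℝ) :
    Differentiable ℝ (scaleX d m t u) := by
  have : Differentiable ℝ (fun q : Pt d m =>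
      (↑(t ^ ((d : ℝ) / 2)) : ℂ) * u (sMap d m t q)) :=
    (hu.comp (sMap d m t).differentiable).const_mul _
  exact this

lemma dX_scaleX (hu : Differentiable ℝ u) (t : ℝ) (p : Pt d m) (i : Fin d) :
    dX (scaleX d m t u) p i
      = (↑(t ^ ((d : ℝ) / 2)) : ℂ) * ((t : ℂ) * dX u (t • p.1, p.2) i) := by
  rw [dX, fderiv_scaleX hu t p]
  have hl : (sMap d m t) ((Pi.single i 1, 0) : Pt d m)
      = t • ((Pi.single i 1, 0) : Pt d m) := by
    rw [sMap_apply, Prod.smul_mk, smul_zero]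
  rw [ContinuousLinearMap.smul_apply, ContinuousLinearMap.comp_apply, hl,
    (fderiv ℝ u (t • p.1, p.2)).map_smul]
  simp only [dX, smul_eq_mul, Complex.real_smul]

lemma dY_scaleX (hu : Differentiable ℝ u) (t : ℝ) (p : Pt d m) (j : Fin m) :
    dY (scaleX d m t u) p j
      = (↑(t ^ ((d : ℝ) / 2)) : ℂ) * dY u (t • p.1, p.2) j := by
  rw [dY, fderiv_scaleX hu t p]
  have hl : (sMap d m t) ((0, Pi.single j 1) : Pt d m)
      = ((0, Pi.single j 1) : Pt d m) := by
    show ((t • (0 : Fin d → ℝ)), (Pi.single j 1 : Fin m → ℝ)) = _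
    rw [smul_zero]
  rw [ContinuousLinearMap.smul_apply, ContinuousLinearMap.comp_apply, hl]
  rw [dY, smul_eq_mul]

lemma norm_scaleX (t : ℝ) (ht : 0 < t) (p : Pt d m) :
    ‖scaleX d m t u p‖ = t ^ ((d : ℝ) / 2) * ‖u (t • p.1, p.2)‖ := by
  rw [scaleX, norm_mul, Complex.norm_real, Real.norm_eq_abs,
    abs_of_pos (Real.rpow_pos_of_pos ht _)]

lemma rpow_half_sq (t : ℝ) (ht : 0 < t) : (t ^ ((d : ℝ) / 2)) ^ 2 = t ^ d := by
  rw [← Real.rpow_natCast (t ^ ((d : ℝ) / 2)) 2, ← Real.rpow_mul ht.le,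
    ← Real.rpow_natCast t d]
  norm_num

lemma mass_scaleX (t : ℝ) (ht : 0 < t) :
    Mass d m (scaleX d m t u) = Mass d m u := by
  have htd : (0 : ℝ) < t ^ d := pow_pos ht d
  have hpt : ∀ p : Pt d m, ‖scaleX d m t u p‖ ^ 2 = t ^ d * ‖u (t • p.1, p.2)‖ ^ 2 := by
    intro p
    rw [norm_scaleX t ht, mul_pow, rpow_half_sq t ht]
  rw [Mass]
  simp_rw [hpt]
  rw [MeasureTheory.integral_const_mul, integral_comp_scale t ht (fun p => ‖u p‖ ^ 2)]
  rw [← mul_assoc, mul_inv_cancel₀ htd.ne', one_mul]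
  rfl

lemma gradYsq_scaleX (hu : Differentiable ℝ u) (t : ℝ) (ht : 0 < t) :
    gradYsq d m (scaleX d m t u) = gradYsq d m u := by
  have htd : (0 : ℝ) < t ^ d := pow_pos ht d
  have hpt : ∀ p : Pt d m, (∑ j, ‖dY (scaleX d m t u) p j‖ ^ 2)
      = t ^ d * ∑ j, ‖dY u (t • p.1, p.2) j‖ ^ 2 := by
    intro p
    rw [Finset.mul_sum]
    refine Finset.sum_congr rfl fun j _ => ?_
    rw [dY_scaleX hu t p j, norm_mul, Complex.norm_real, Real.norm_eq_abs,
      abs_of_pos (Real.rpow_pos_of_pos ht _), mul_pow, rpow_half_sq t ht]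
  rw [gradYsq]
  simp_rw [hpt]
  rw [MeasureTheory.integral_const_mul,
    integral_comp_scale t ht (fun p => ∑ j, ‖dY u p j‖ ^ 2)]
  rw [← mul_assoc, mul_inv_cancel₀ htd.ne', one_mul]
  rfl

lemma gradXsq_scaleX (hu : Differentiable ℝ u) (t : ℝ) (ht : 0 < t) :
    gradXsq d m (scaleX d m t u) = t ^ 2 * gradXsq d m u := by
  have htd : (0 : ℝ) < t ^ d := pow_pos ht d
  have hpt : ∀ p : Pt d m, (∑ i, ‖dX (scaleX d m t u) p i‖ ^ 2)
      = (t ^ d * t ^ 2) * ∑ i, ‖dX u (t • p.1, p.2) i‖ ^ 2 := by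
    intro p
    rw [Finset.mul_sum]
    refine Finset.sum_congr rfl fun i _ => ?_
    rw [dX_scaleX hu t p i, norm_mul, norm_mul, Complex.norm_real, Complex.norm_real,
      Real.norm_eq_abs, Real.norm_eq_abs, abs_of_pos (Real.rpow_pos_of_pos ht _),
      abs_of_pos ht, mul_pow, mul_pow, rpow_half_sq t ht]
    ring
  rw [gradXsq]
  simp_rw [hpt]
  rw [MeasureTheory.integral_const_mul,
    integral_comp_scale t ht (fun p => ∑ i, ‖dX u p i‖ ^ 2)]
  have : (t ^ d * t ^ 2) * ((t ^ d)⁻¹ * ∫ p, (∑ i, ‖dX u p i‖ ^ 2) ∂(μw d m))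
      = t ^ 2 * ∫ p, (∑ i, ‖dX u p i‖ ^ 2) ∂(μw d m) := by
    field_simp
  rw [this]
  rfl

lemma pot_scaleX (hd : 1 ≤ d) (t : ℝ) (ht : 0 < t) :
    Pot d m (4 / (d : ℝ)) (scaleX d m t u) = t ^ 2 * Pot d m (4 / (d : ℝ)) u := by
  have hd0 : (d : ℝ) ≠ 0 := Nat.cast_ne_zero.mpr (by omega)
  have htd : (0 : ℝ) < t ^ d := pow_pos ht d
  have hexp : (d : ℝ) / 2 * (4 / (d : ℝ) + 2) = 2 + d := by field_simp; ring
  have hpt : ∀ p : Pt d m, ‖scaleX d m t u p‖ ^ (4 / (d : ℝ) + 2)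
      = (t ^ 2 * t ^ d) * ‖u (t • p.1, p.2)‖ ^ (4 / (d : ℝ) + 2) := by
    intro p
    rw [norm_scaleX t ht,
      Real.mul_rpow (Real.rpow_pos_of_pos ht _).le (norm_nonneg _)]
    congr 1
    rw [← Real.rpow_natCast t 2, ← Real.rpow_natCast t d, ← Real.rpow_add ht,
      ← Real.rpow_mul ht.le, hexp]
    norm_num
  rw [Pot]
  simp_rw [hpt]
  rw [MeasureTheory.integral_const_mul,
    integral_comp_scale t ht (fun p => ‖u p‖ ^ (4 / (d : ℝ) + 2))]
  have : (t ^ 2 * t ^ d) * ((t ^ d)⁻¹ * ∫ p, ‖u p‖ ^ (4 / (d : ℝ) + 2) ∂(μw d m))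
      = t ^ 2 * ∫ p, ‖u p‖ ^ (4 / (d : ℝ) + 2) ∂(μw d m) := by
    field_simp
  rw [this]
  rfl

set_option maxHeartbeats 1000000 in
lemma inH1_scaleX (hd : 1 ≤ d) (hu : InH1 d m (4 / (d : ℝ)) u) (t : ℝ) (ht : 0 < t) :
    InH1 d m (4 / (d : ℝ)) (scaleX d m t u) := by
  have hd0 : (d : ℝ) ≠ 0 := Nat.cast_ne_zero.mpr (by omega)
  have hc : (0 : ℝ) < t ^ ((d : ℝ) / 2) := Real.rpow_pos_of_pos ht _
  refine ⟨diff_scaleX hu.diff t, ?_, ?_, ?_, ?_⟩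
  · intro p k
    show (↑(t ^ ((d : ℝ) / 2)) : ℂ) * u (t • p.1, p.2 + fun i => 2 * π * (k i : ℝ)) = _
    rw [hu.periodic (t • p.1, p.2) k]
    rfl
  · have hpt : (fun p : Pt d m => ‖scaleX d m t u p‖ ^ 2)
        = fun p : Pt d m => t ^ d * ‖u (t • p.1, p.2)‖ ^ 2 := by
      funext p
      rw [norm_scaleX t ht, mul_pow, rpow_half_sq t ht]
    rw [hpt]
    exact (integrable_comp_scale t ht hu.memL2).const_mul _
  · -- gradient in L2
    have hbd : ∀ p : Pt d m, ‖fderiv ℝ (scaleX d m t u) p‖ ^ 2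
        ≤ (t ^ ((d : ℝ) / 2) * ‖sMap d m t‖) ^ 2 * ‖fderiv ℝ u (t • p.1, p.2)‖ ^ 2 := by
      intro p
      have h1 : ‖fderiv ℝ (scaleX d m t u) p‖
          ≤ (t ^ ((d : ℝ) / 2) * ‖sMap d m t‖) * ‖fderiv ℝ u (t • p.1, p.2)‖ := by
        calc ‖fderiv ℝ (scaleX d m t u) p‖
            = ‖(↑(t ^ ((d : ℝ) / 2)) : ℂ) •
                ((fderiv ℝ u (t • p.1, p.2)).comp (sMap d m t))‖ := by
              rw [fderiv_scaleX hu.diff t p]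
          _ ≤ ‖(↑(t ^ ((d : ℝ) / 2)) : ℂ)‖ *
                ‖(fderiv ℝ u (t • p.1, p.2)).comp (sMap d m t)‖ :=
              ContinuousLinearMap.opNorm_smul_le _ _
          _ ≤ ‖(↑(t ^ ((d : ℝ) / 2)) : ℂ)‖ *
                (‖fderiv ℝ u (t • p.1, p.2)‖ * ‖sMap d m t‖) :=
              mul_le_mul_of_nonneg_left (ContinuousLinearMap.opNorm_comp_le _ _)
                (norm_nonneg _)
          _ = (t ^ ((d : ℝ) / 2) * ‖sMap d m t‖) * ‖fderiv ℝ u (t • p.1, p.2)‖ := by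
              rw [Complex.norm_real, Real.norm_eq_abs, abs_of_pos hc]; ring
      calc ‖fderiv ℝ (scaleX d m t u) p‖ ^ 2
          ≤ ((t ^ ((d : ℝ) / 2) * ‖sMap d m t‖) * ‖fderiv ℝ u (t • p.1, p.2)‖) ^ 2 :=
            pow_le_pow_left₀ (norm_nonneg _) h1 2
        _ = (t ^ ((d : ℝ) / 2) * ‖sMap d m t‖) ^ 2 * ‖fderiv ℝ u (t • p.1, p.2)‖ ^ 2 := by
            ring
    refine Integrable.mono'
      ((integrable_comp_scale t ht hu.memGradL2).const_mul
        ((t ^ ((d : ℝ) / 2) * ‖sMap d m t‖) ^ 2)) ?_ ?_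
    · exact ((measurable_fderiv ℝ (scaleX d m t u)).norm.pow_const 2).aestronglyMeasurable
    · filter_upwards with p
      rw [Real.norm_eq_abs, abs_of_nonneg (by positivity)]
      exact hbd p
  · have hexp : (d : ℝ) / 2 * (4 / (d : ℝ) + 2) = 2 + d := by field_simp; ring
    have hpt : (fun p : Pt d m => ‖scaleX d m t u p‖ ^ (4 / (d : ℝ) + 2))
        = fun p : Pt d m => (t ^ 2 * t ^ d) * ‖u (t • p.1, p.2)‖ ^ (4 / (d : ℝ) + 2) := by
      funext p
      rw [norm_scaleX t ht,
        Real.mul_rpow (Real.rpow_pos_of_pos ht _).le (norm_nonneg _)]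
      congr 1
      rw [← Real.rpow_natCast t 2, ← Real.rpow_natCast t d, ← Real.rpow_add ht,
        ← Real.rpow_mul ht.le, hexp]
      norm_num
    rw [hpt]
    exact (integrable_comp_scale t ht hu.memLp).const_mul _

end ScaleAux

/-- In the mass-critical case `α = 4/d`, for any `ω > 0`, `t > 0`
and any minimizer `u` of `γ_ω`, the rescaled function `v^t(x,y) = t^{d/2} u(tx,y)`
is also a minimizer of `γ_ω`. -/
theorem scaleX_gamma_minimizer (d m : ℕ) (hd : 1 ≤ d) (hm : m ≤ 1)
    (ω : ℝ) (hω : 0 < ω) (u : Pt d m → ℂ)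
    (hu : IsGammaMin d m (4 / (d : ℝ)) ω u) (t : ℝ) (ht : 0 < t) :
    IsGammaMin d m (4 / (d : ℝ)) ω (scaleX d m t u) := by
  obtain ⟨hH1, hne, hK, hS⟩ := hu
  set α : ℝ := 4 / (d : ℝ) with hα
  have hd0 : (d : ℝ) ≠ 0 := Nat.cast_ne_zero.mpr (by omega)
  have hα2 : (0 : ℝ) < α + 2 := by
    have : (0 : ℝ) ≤ α := by positivity
    linarith
  have hc : (0 : ℝ) < t ^ ((d : ℝ) / 2) := Real.rpow_pos_of_pos ht _
  -- the basic scaling identities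
  have hM : Mass d m (scaleX d m t u) = Mass d m u := mass_scaleX t ht
  have hGX : gradXsq d m (scaleX d m t u) = t ^ 2 * gradXsq d m u :=
    gradXsq_scaleX hH1.diff t ht
  have hGY : gradYsq d m (scaleX d m t u) = gradYsq d m u :=
    gradYsq_scaleX hH1.diff t ht
  have hP : Pot d m α (scaleX d m t u) = t ^ 2 * Pot d m α u := pot_scaleX hd t ht
  -- membership in H¹
  have hH1v : InH1 d m α (scaleX d m t u) := inH1_scaleX hd hH1 t ht
  -- nonvanishing
  have hnev : scaleX d m t u ≠ 0 := by
    intro h0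
    apply hne
    funext q
    have := congrFun h0 (t⁻¹ • q.1, q.2)
    simp only [scaleX, Pi.zero_apply] at this
    rw [smul_inv_smul₀ ht.ne'] at this
    have hcne : ((↑(t ^ ((d : ℝ) / 2)) : ℂ)) ≠ 0 := by
      simp only [ne_eq, Complex.ofReal_eq_zero]
      exact hc.ne'
    have := mul_eq_zero.mp this
    rcases this with h | h
    · exact absurd h hcne
    · simpa using h
  -- virial identity
  have hKv : Kw d m α (scaleX d m t u) = 0 := by
    rw [Kw] at hK
    rw [Kw, hGX, hP]
    linear_combination (t ^ 2) * hK
  -- action identity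
  have hSv : Sw d m α ω (scaleX d m t u) = Sw d m α ω u := by
    have hcoef : α * (d : ℝ) / (2 * (α + 2)) = 2 / (α + 2) := by
      rw [hα]; field_simp; ring
    rw [Kw, hcoef] at hK
    have hgXu : gradXsq d m u = 2 / (α + 2) * Pot d m α u := by linarith
    rw [Sw, Sw, En, En, hGX, hGY, hP, hM, hgXu]
    field_simp
    ring
  exact ⟨hH1v, hnev, hKv, by rw [hSv, hS]⟩

end NLS
end
end

section
/- Equivalent formulation of γ_ω: For any ω ∈ (0,∞), define I_ω(u) := S_ω(u) − ½K(u) = (ω/2)M(u) + ½‖∇_y u‖_{L²}² + (αd−4)/(4(α+2))·‖u‖_{L^{α+2}}^{α+2} and γ̄_ω := inf{I_ω(u): u ∈ H^1(ℝ^d×T^m)∖{0}, K(u) ≤ 0}. Then γ_ω = γ̄_ω. -/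
open MeasureTheory Real Filter Topology

noncomputable section

namespace NLS

/-- The functional `I_ω(u) = S_ω(u) - K(u)/2`. -/
def Iw (d m : ℕ) (α ω : ℝ) (u : Pt d m → ℂ) : ℝ :=
  Sw d m α ω u - Kw d m α u / 2

/-!
Since `S_ω = I_ω + K/2`, the two infima agree as soon as every `u ≠ 0` with `K(u) ≤ 0` can be
replaced by some `w ≠ 0` with `K(w) = 0` and `S_ω(w) ≤ I_ω(u)`. For `αd ≥ 4` and `ω ≥ 0` all
coefficients of `I_ω` are nonnegative, so `I_ω(c u) ≤ I_ω(u)` for `|c| ≤ 1`; and since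
`K(c u) = c² ‖∇ₓu‖² - c^(α+2) · αd/(2(α+2)) ‖u‖_{α+2}^{α+2}`, a unique `c ∈ (0, 1]` makes it vanish
when `∇ₓu ≠ 0`. When `∇ₓu = 0` scaling is useless; instead the Galilean boost `e^{iξx₁} u` keeps
`M`, `‖∇_y u‖²` and `‖u‖_{α+2}` (hence `I_ω`) and raises `‖∇ₓ u‖²` to `ξ² M(u)`.
-/

section Functionals

variable {d m : ℕ}

lemma mass_nonneg (u : Pt d m → ℂ) : 0 ≤ Mass d m u :=
  integral_nonneg fun _ => by positivity

lemma pot_nonneg (α : ℝ) (u : Pt d m → ℂ) : 0 ≤ Pot d m α u :=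
  integral_nonneg fun _ => by positivity

lemma gradXsq_nonneg (u : Pt d m → ℂ) : 0 ≤ gradXsq d m u :=
  integral_nonneg fun _ => by positivity

lemma gradYsq_nonneg (u : Pt d m → ℂ) : 0 ≤ gradYsq d m u :=
  integral_nonneg fun _ => by positivity

lemma Iw_eq {α : ℝ} (hα : α + 2 ≠ 0) (ω : ℝ) (u : Pt d m → ℂ) :
    Iw d m α ω u = ω / 2 * Mass d m u + gradYsq d m u / 2
      + (α * d - 4) / (4 * (α + 2)) * Pot d m α u := by
  unfold Iw Sw En Kw
  field_simp
  ring

lemma Sw_eq_Iw_of_Kw_eq_zero {α ω : ℝ} {u : Pt d m → ℂ} (hK : Kw d m α u = 0) :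
    Sw d m α ω u = Iw d m α ω u := by
  rw [Iw, hK, zero_div, sub_zero]

lemma pot_eq_zero_of_mass_eq_zero {α : ℝ} (hα : α + 2 ≠ 0) {u : Pt d m → ℂ}
    (hu : Integrable (fun p => ‖u p‖ ^ 2) (μw d m)) (hM : Mass d m u = 0) :
    Pot d m α u = 0 := by
  have hzero : (fun p => ‖u p‖ ^ 2) =ᵐ[μw d m] 0 :=
    (integral_eq_zero_iff_of_nonneg (fun _ => by positivity) hu).mp hM
  refine integral_eq_zero_of_ae ?_
  filter_upwards [hzero] with p hp
  rw [Pi.zero_apply, sq_eq_zero_iff] at hp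
  rw [hp, Pi.zero_apply, Real.zero_rpow hα]

lemma mass_congr_norm {u w : Pt d m → ℂ} (h : ∀ p, ‖w p‖ = ‖u p‖) :
    Mass d m w = Mass d m u := by
  simp only [Mass, h]

lemma pot_congr_norm (α : ℝ) {u w : Pt d m → ℂ} (h : ∀ p, ‖w p‖ = ‖u p‖) :
    Pot d m α w = Pot d m α u := by
  simp only [Pot, h]

end Functionals

section Scaling

variable {d m : ℕ} {α : ℝ}

lemma InH1.const_mul {u : Pt d m → ℂ} (hu : InH1 d m α u) (c : ℂ) :
    InH1 d m α (fun p => c * u p) where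
  diff := hu.diff.const_mul c
  periodic p k := by simp only [hu.periodic p k]
  memL2 := by
    simpa only [norm_mul, mul_pow] using hu.memL2.const_mul (‖c‖ ^ 2)
  memGradL2 := by
    simpa only [fderiv_const_mul (hu.diff _), norm_smul, mul_pow]
      using hu.memGradL2.const_mul (‖c‖ ^ 2)
  memLp := by
    simpa only [norm_mul, Real.mul_rpow (norm_nonneg c) (norm_nonneg _)]
      using hu.memLp.const_mul (‖c‖ ^ (α + 2))

lemma mass_const_mul (c : ℂ) (u : Pt d m → ℂ) :
    Mass d m (fun p => c * u p) = ‖c‖ ^ 2 * Mass d m u := by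
  simp only [Mass, norm_mul, mul_pow, integral_const_mul]

lemma pot_const_mul (c : ℂ) (u : Pt d m → ℂ) :
    Pot d m α (fun p => c * u p) = ‖c‖ ^ (α + 2) * Pot d m α u := by
  simp only [Pot, norm_mul, Real.mul_rpow (norm_nonneg c) (norm_nonneg _), integral_const_mul]

lemma gradXsq_const_mul {u : Pt d m → ℂ} (hu : Differentiable ℝ u) (c : ℂ) :
    gradXsq d m (fun p => c * u p) = ‖c‖ ^ 2 * gradXsq d m u := by
  simp only [gradXsq, dX, fderiv_const_mul (hu _), smul_apply, norm_smul,
    mul_pow, ← Finset.mul_sum, integral_const_mul]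

lemma gradYsq_const_mul {u : Pt d m → ℂ} (hu : Differentiable ℝ u) (c : ℂ) :
    gradYsq d m (fun p => c * u p) = ‖c‖ ^ 2 * gradYsq d m u := by
  simp only [gradYsq, dY, fderiv_const_mul (hu _), smul_apply, norm_smul,
    mul_pow, ← Finset.mul_sum, integral_const_mul]

end Scaling

section Modulation

variable {d m : ℕ} {α : ℝ}

def xPhase (k : Fin d) (ξ : ℝ) : Pt d m →L[ℝ] ℂ :=
  ((ContinuousLinearMap.proj k).comp (ContinuousLinearMap.fst ℝ _ _)).smulRight (ξ * Complex.I)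

lemma xPhase_apply (k : Fin d) (ξ : ℝ) (v : Pt d m) :
    xPhase k ξ v = v.1 k * (ξ * Complex.I) := by
  simp [xPhase, Complex.real_smul]

lemma norm_exp_xPhase (k : Fin d) (ξ : ℝ) (p : Pt d m) :
    ‖Complex.exp (xPhase k ξ p)‖ = 1 := by
  simp [xPhase_apply, Complex.norm_exp]

def modulate (k : Fin d) (ξ : ℝ) (u : Pt d m → ℂ) : Pt d m → ℂ :=
  fun p => Complex.exp (xPhase k ξ p) * u p

variable {k : Fin d} {ξ : ℝ} {u : Pt d m → ℂ}

lemma norm_modulate (p : Pt d m) : ‖modulate k ξ u p‖ = ‖u p‖ := by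
  rw [modulate, norm_mul, norm_exp_xPhase, one_mul]

lemma hasFDerivAt_modulate {p : Pt d m} (hu : DifferentiableAt ℝ u p) :
    HasFDerivAt (modulate k ξ u)
      (Complex.exp (xPhase k ξ p) • (fderiv ℝ u p + u p • xPhase k ξ)) p := by
  refine (((xPhase k ξ).hasFDerivAt.cexp).mul hu.hasFDerivAt).congr_fderiv ?_
  rw [smul_add, smul_comm (u p)]

lemma fderiv_modulate_apply (hu : Differentiable ℝ u) (p v : Pt d m) :
    fderiv ℝ (modulate k ξ u) p v
      = Complex.exp (xPhase k ξ p) * (fderiv ℝ u p v + u p * xPhase k ξ v) := by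
  simp [(hasFDerivAt_modulate (hu p)).fderiv, mul_add]

lemma InH1.modulate (hu : InH1 d m α u) : InH1 d m α (modulate k ξ u) where
  diff p := (hasFDerivAt_modulate (hu.diff p)).differentiableAt
  periodic p j := by simp only [NLS.modulate, xPhase_apply, hu.periodic p j]
  memL2 := by simpa only [norm_modulate] using hu.memL2
  memGradL2 := by
    set G : Pt d m →L[ℝ] ℂ := xPhase k ξ
    refine Integrable.mono' ((hu.memGradL2.add (hu.memL2.const_mul (‖G‖ ^ 2))).const_mul 2)
      ((measurable_fderiv ℝ _).norm.pow_const 2).aestronglyMeasurable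
      (Eventually.of_forall fun p => ?_)
    have hbound : ‖fderiv ℝ (NLS.modulate k ξ u) p‖ ≤ ‖fderiv ℝ u p‖ + ‖G‖ * ‖u p‖ := by
      rw [(hasFDerivAt_modulate (hu.diff p)).fderiv, norm_smul, norm_exp_xPhase, one_mul,
        mul_comm _ ‖u p‖, ← norm_smul]
      exact norm_add_le _ _
    rw [Real.norm_of_nonneg (by positivity)]
    calc ‖fderiv ℝ (NLS.modulate k ξ u) p‖ ^ 2
        ≤ (‖fderiv ℝ u p‖ + ‖G‖ * ‖u p‖) ^ 2 := by gcongr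
      _ ≤ 2 * (‖fderiv ℝ u p‖ ^ 2 + ‖G‖ ^ 2 * ‖u p‖ ^ 2) := by
        simpa only [mul_pow] using add_sq_le (a := ‖fderiv ℝ u p‖) (b := ‖G‖ * ‖u p‖)
  memLp := by simpa only [norm_modulate] using hu.memLp

lemma gradYsq_modulate (hu : Differentiable ℝ u) :
    gradYsq d m (modulate k ξ u) = gradYsq d m u := by
  simp only [gradYsq, dY, fderiv_modulate_apply hu, norm_mul, norm_exp_xPhase, one_mul]
  simp [xPhase_apply]

lemma gradXsq_modulate_of_ae_dX_eq_zero (hu : Differentiable ℝ u)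
    (hdX : ∀ᵐ p ∂(μw d m), ∀ i, dX u p i = 0) :
    gradXsq d m (modulate k ξ u) = ξ ^ 2 * Mass d m u := by
  rw [Mass, ← integral_const_mul]
  refine integral_congr_ae ?_
  filter_upwards [hdX] with p hp
  simp only [dX] at hp
  simp only [dX, fderiv_modulate_apply hu, hp, norm_mul, norm_exp_xPhase, one_mul, zero_add]
  simp [xPhase_apply, Pi.single_apply, apply_ite, ite_pow, mul_pow, mul_comm]

end Modulation

section Reduction

variable {d m : ℕ} {α ω : ℝ} {u : Pt d m → ℂ}

lemma norm_dX_le (u : Pt d m → ℂ) (p : Pt d m) (i : Fin d) : ‖dX u p i‖ ≤ ‖fderiv ℝ u p‖ := by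
  simpa [dX] using (fderiv ℝ u p).le_opNorm_of_le (x := (Pi.single i 1, 0)) (c := 1)
    (by simp [Pi.norm_single])

lemma InH1.ae_dX_eq_zero_of_gradXsq_eq_zero (hu : InH1 d m α u) (hX : gradXsq d m u = 0) :
    ∀ᵐ p ∂(μw d m), ∀ i, dX u p i = 0 := by
  have hint : Integrable (fun p => ∑ i, ‖dX u p i‖ ^ 2) (μw d m) :=
    integrable_finsetSum _ fun i _ => hu.memGradL2.mono'
      ((measurable_fderiv_apply_const ℝ u _).norm.pow_const 2).aestronglyMeasurable
      (Eventually.of_forall fun p => by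
        rw [Real.norm_of_nonneg (by positivity)]
        gcongr
        exact norm_dX_le u p i)
  filter_upwards [(integral_eq_zero_iff_of_nonneg (fun _ => by positivity) hint).mp hX]
    with p hp i
  simpa using (Finset.sum_eq_zero_iff_of_nonneg (fun _ _ => by positivity)).mp hp i
    (Finset.mem_univ i)

lemma modulate_ne_zero {k : Fin d} {ξ : ℝ} (hu : u ≠ 0) : modulate k ξ u ≠ 0 := by
  contrapose! hu
  funext p
  simpa [modulate, Complex.exp_ne_zero] using congrFun hu p

lemma Iw_modulate (hα : α + 2 ≠ 0) (k : Fin d) (ξ : ℝ) (hu : Differentiable ℝ u) :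
    Iw d m α ω (modulate k ξ u) = Iw d m α ω u := by
  rw [Iw_eq hα, Iw_eq hα, mass_congr_norm norm_modulate, pot_congr_norm α norm_modulate,
    gradYsq_modulate hu]

lemma exists_modulate_Kw_eq_zero (hα : α + 2 ≠ 0) (k : Fin d) (hu : InH1 d m α u)
    (hX : gradXsq d m u = 0) (hK : Kw d m α u ≤ 0) :
    ∃ ξ : ℝ, Kw d m α (modulate k ξ u) = 0 := by
  set B := α * d / (2 * (α + 2)) * Pot d m α u
  have hB : 0 ≤ B := by
    have : Kw d m α u = gradXsq d m u - B := rfl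
    linarith
  -- `B / 0 = 0` in Lean, which is harmless because `M(u) = 0` forces `B = 0`
  have hBM : B / Mass d m u * Mass d m u = B := by
    rcases eq_or_ne (Mass d m u) 0 with hM | hM
    · simp [B, hM, pot_eq_zero_of_mass_eq_zero hα hu.memL2 hM]
    · exact div_mul_cancel₀ B hM
  refine ⟨√(B / Mass d m u), ?_⟩
  rw [Kw, gradXsq_modulate_of_ae_dX_eq_zero hu.diff (hu.ae_dX_eq_zero_of_gradXsq_eq_zero hX),
    pot_congr_norm α norm_modulate, Real.sq_sqrt (div_nonneg hB (mass_nonneg u)), hBM, sub_self]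

lemma exists_ofReal_mul_Kw_eq_zero (hα : 0 < α) (hu : Differentiable ℝ u)
    (hX : 0 < gradXsq d m u) (hK : Kw d m α u ≤ 0) :
    ∃ c : ℝ, 0 < c ∧ c ≤ 1 ∧ Kw d m α (fun p => (c : ℂ) * u p) = 0 := by
  set A := gradXsq d m u
  set B := α * d / (2 * (α + 2)) * Pot d m α u
  have hAB : A ≤ B := by
    have : Kw d m α u = A - B := rfl
    linarith
  have hB : 0 < B := hX.trans_le hAB
  have hpos : 0 < A / B := div_pos hX hB
  set c := (A / B) ^ α⁻¹
  have hc : 0 < c := by positivity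
  have hcα : c ^ α = A / B := Real.rpow_inv_rpow hpos.le hα.ne'
  refine ⟨c, hc, Real.rpow_le_one hpos.le ((div_le_one hB).2 hAB) (by positivity), ?_⟩
  have hcα2 : c ^ (α + 2) = A / B * c ^ 2 := by
    rw [Real.rpow_add hc, hcα, Real.rpow_two]
  have hBdef : α * d / (2 * (α + 2)) * Pot d m α u = B := rfl
  rw [Kw, gradXsq_const_mul hu, pot_const_mul, Complex.norm_real, Real.norm_of_nonneg hc.le, hcα2]
  linear_combination (-(A / B * c ^ 2)) * hBdef - c ^ 2 * div_mul_cancel₀ A hB.ne'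

lemma Iw_const_mul_le (hα : 0 < α) (hαd : 4 ≤ α * d) (hω : 0 ≤ ω) (hu : Differentiable ℝ u)
    {c : ℂ} (hc : ‖c‖ ≤ 1) :
    Iw d m α ω (fun p => c * u p) ≤ Iw d m α ω u := by
  have hα2 : 0 < α + 2 := by linarith
  rw [Iw_eq hα2.ne', Iw_eq hα2.ne', mass_const_mul, gradYsq_const_mul hu, pot_const_mul]
  have hc2 : ‖c‖ ^ 2 ≤ 1 := pow_le_one₀ (norm_nonneg c) hc
  have hcα : ‖c‖ ^ (α + 2) ≤ 1 := Real.rpow_le_one (norm_nonneg c) hc hα2.le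
  have hM := mul_le_mul_of_nonneg_left (mul_le_of_le_one_left (mass_nonneg u) hc2)
    (by positivity : 0 ≤ ω / 2)
  have hY := mul_le_of_le_one_left (gradYsq_nonneg u) hc2
  have hP := mul_le_mul_of_nonneg_left (mul_le_of_le_one_left (pot_nonneg α u) hcα)
    (by positivity : 0 ≤ (α * d - 4) / (4 * (α + 2)))
  linarith

theorem exists_Kw_eq_zero_Sw_le_Iw (hα : 0 < α) (hαd : 4 ≤ α * d) (hω : 0 ≤ ω)
    (hu : InH1 d m α u) (hne : u ≠ 0) (hK : Kw d m α u ≤ 0) :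
    ∃ w, InH1 d m α w ∧ w ≠ 0 ∧ Kw d m α w = 0 ∧ Sw d m α ω w ≤ Iw d m α ω u := by
  rcases (gradXsq_nonneg u).eq_or_lt with hX | hX
  · have hd : 0 < d := by
      by_contra! h
      norm_num [Nat.le_zero.mp h] at hαd
    obtain ⟨ξ, hξ⟩ := exists_modulate_Kw_eq_zero (by linarith) ⟨0, hd⟩ hu hX.symm hK
    refine ⟨_, hu.modulate, modulate_ne_zero hne, hξ, ?_⟩
    rw [Sw_eq_Iw_of_Kw_eq_zero hξ, Iw_modulate (by linarith) _ _ hu.diff]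
  · obtain ⟨c, hc0, hc1, hc⟩ := exists_ofReal_mul_Kw_eq_zero hα hu.diff hX hK
    refine ⟨_, hu.const_mul c, ?_, hc, ?_⟩
    · contrapose! hne
      funext p
      simpa [hc0.ne'] using congrFun hne p
    · rw [Sw_eq_Iw_of_Kw_eq_zero hc]
      exact Iw_const_mul_le hα hαd hω hu.diff (by simpa [abs_of_pos hc0] using hc1)

end Reduction

theorem gamma_eq_gammaBar_general (d m : ℕ) (hd : 1 ≤ d) (α : ℝ)
    (hα₁ : 4 / (d : ℝ) ≤ α)
    (ω : ℝ) (hω : 0 < ω) :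
    (∀ u : Pt d m → ℂ, Iw d m α ω u = ω / 2 * Mass d m u + gradYsq d m u / 2
        + (α * d - 4) / (4 * (α + 2)) * Pot d m α u) ∧
    gamma d m α ω
      = sInf (Iw d m α ω '' {u | InH1 d m α u ∧ u ≠ 0 ∧ Kw d m α u ≤ 0}) := by
  have hdpos : (0 : ℝ) < d := by exact_mod_cast hd
  have hα : 0 < α := (div_pos four_pos hdpos).trans_le hα₁
  have hαd : 4 ≤ α * d := (div_le_iff₀ hdpos).mp hα₁
  refine ⟨Iw_eq (by linarith) ω, csInf_eq_csInf_of_forall_exists_le ?_ ?_⟩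
  · rintro _ ⟨u, ⟨hu, hne, hK⟩, rfl⟩
    exact ⟨_, ⟨u, ⟨hu, hne, hK.le⟩, rfl⟩, (Sw_eq_Iw_of_Kw_eq_zero hK).ge⟩
  · rintro _ ⟨u, ⟨hu, hne, hK⟩, rfl⟩
    obtain ⟨w, hw, hwne, hwK, hle⟩ := exists_Kw_eq_zero_Sw_le_Iw hα hαd hω.le hu hne hK
    exact ⟨_, ⟨w, ⟨hw, hwne, hwK⟩, rfl⟩, hle⟩

/-- equivalent formulation of `γ_ω`: with
`I_ω(u) = S_ω(u) - K(u)/2 = (ω/2)M(u) + ½‖∇_y u‖₂² + (αd-4)/(4(α+2)) ‖u‖_{α+2}^{α+2}`,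
one has `γ_ω = γ̄_ω := inf {I_ω(u) : u ∈ H¹∖{0}, K(u) ≤ 0}`. -/
theorem gamma_eq_gammaBar (d m : ℕ) (hd : 1 ≤ d) (hm : m ≤ 1) (α : ℝ)
    (hα₁ : 4 / (d : ℝ) ≤ α) (hα₂ : 3 ≤ d + m → α < 4 / ((d : ℝ) + m - 2))
    (ω : ℝ) (hω : 0 < ω) :
    (∀ u : Pt d m → ℂ, Iw d m α ω u = ω / 2 * Mass d m u + gradYsq d m u / 2
        + (α * d - 4) / (4 * (α + 2)) * Pot d m α u) ∧
    gamma d m α ω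
      = sInf (Iw d m α ω '' {u | InH1 d m α u ∧ u ≠ 0 ∧ Kw d m α u ≤ 0}) :=
  gamma_eq_gammaBar_general d m hd α hα₁ ω hω

end NLS
end
end
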